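/- For any square complex matrix A of rank r ≥ 1, tr(A*A) ≥ |tr(A)|² / r, where A* denotes the conjugate transpose. -/

import Mathlib

/-!
Let `P` be the orthogonal projection onto the range of `A`. Then `tr A = tr (Pᴴ A)`, and the
Cauchy–Schwarz inequality for the Frobenius inner product `⟪B, C⟫ = tr (Bᴴ C)` gives
`|tr A|² ≤ tr (Pᴴ P) · tr (Aᴴ A)`. Since `P` is a self-adjoint idempotent,
`tr (Pᴴ P) = tr P = rank A`.
-/

namespace Matrix

variable {𝕜 : Type*} [RCLike 𝕜] {m n : Type*} [Fintype m] [Fintype n]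

theorem trace_conjTranspose_mul_eq_inner (B C : Matrix m n 𝕜) :
    (Bᴴ * C).trace = inner 𝕜 (WithLp.toLp 2 B.vec) (WithLp.toLp 2 C.vec) := by
  rw [EuclideanSpace.inner_toLp_toLp, dotProduct_comm, star_vec_dotProduct_vec]

theorem re_trace_conjTranspose_mul_self (B : Matrix m n 𝕜) :
    RCLike.re (Bᴴ * B).trace = ‖WithLp.toLp 2 B.vec‖ ^ 2 := by
  rw [trace_conjTranspose_mul_eq_inner, inner_self_eq_norm_sq]

theorem re_trace_conjTranspose_mul_self_nonneg (B : Matrix m n 𝕜) :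
    0 ≤ RCLike.re (Bᴴ * B).trace := by
  rw [re_trace_conjTranspose_mul_self]
  positivity

theorem norm_trace_conjTranspose_mul_sq_le (B C : Matrix m n 𝕜) :
    ‖(Bᴴ * C).trace‖ ^ 2 ≤ RCLike.re (Bᴴ * B).trace * RCLike.re (Cᴴ * C).trace := by
  rw [trace_conjTranspose_mul_eq_inner, re_trace_conjTranspose_mul_self,
    re_trace_conjTranspose_mul_self, ← mul_pow]
  exact pow_le_pow_left₀ (norm_nonneg _) (norm_inner_le_norm _ _) 2

variable [DecidableEq n]

theorem rank_eq_finrank_range_toEuclideanLin (A : Matrix m n 𝕜) :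
    A.rank = Module.finrank 𝕜 (LinearMap.range (toEuclideanLin A)) := by
  rw [toEuclideanLin_eq_toLin_orthonormal]
  exact rank_eq_finrank_range_toLin A _ _

variable [DecidableEq m]

noncomputable def rangeProjection (A : Matrix m n 𝕜) : Matrix m m 𝕜 :=
  (toEuclideanCLM (n := m) (𝕜 := 𝕜)).symm
    (LinearMap.range (toEuclideanLin A)).starProjection

theorem isStarProjection_rangeProjection (A : Matrix m n 𝕜) :
    IsStarProjection A.rangeProjection :=
  isStarProjection_starProjection.map (toEuclideanCLM (n := m) (𝕜 := 𝕜)).symm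

theorem rangeProjection_mul (A : Matrix m n 𝕜) : A.rangeProjection * A = A := by
  apply toEuclideanLin.injective
  rw [toLpLin_mul (q := 2), ← coe_toEuclideanCLM_eq_toEuclideanLin A.rangeProjection,
    rangeProjection, StarAlgEquiv.apply_symm_apply]
  exact LinearMap.ext fun x ↦
    Submodule.starProjection_eq_self_iff.2 (LinearMap.mem_range_self _ x)

theorem trace_rangeProjection (A : Matrix m n 𝕜) : A.rangeProjection.trace = A.rank := by
  set U := LinearMap.range (toEuclideanLin A)
  have hproj : LinearMap.IsProj U (U.starProjection : EuclideanSpace 𝕜 m →ₗ[𝕜] _) :=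
    ⟨U.starProjection_apply_mem, fun _ ↦ Submodule.starProjection_eq_self_iff.2⟩
  rw [rank_eq_finrank_range_toEuclideanLin, ← hproj.trace,
    LinearMap.trace_eq_matrix_trace 𝕜 (EuclideanSpace.basisFun m 𝕜).toBasis]
  -- `toEuclideanCLM.symm` is `LinearMap.toMatrix` in the standard orthonormal basis
  rfl

theorem norm_trace_sq_le_rank_mul_re_trace_conjTranspose_mul_self (A : Matrix n n 𝕜) :
    ‖A.trace‖ ^ 2 ≤ A.rank * RCLike.re (Aᴴ * A).trace := by
  obtain ⟨hidem, hself⟩ := A.isStarProjection_rangeProjection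
  have hP : A.rangeProjectionᴴ = A.rangeProjection := hself
  calc ‖A.trace‖ ^ 2 = ‖(A.rangeProjectionᴴ * A).trace‖ ^ 2 := by
        rw [hP, rangeProjection_mul]
    _ ≤ RCLike.re (A.rangeProjectionᴴ * A.rangeProjection).trace * RCLike.re (Aᴴ * A).trace :=
        norm_trace_conjTranspose_mul_sq_le _ _
    _ = A.rank * RCLike.re (Aᴴ * A).trace := by
        rw [hP, hidem.eq, trace_rangeProjection, RCLike.natCast_re]

end Matrix

open Matrix

theorem stmt_1_general {n : ℕ} (A : Matrix (Fin n) (Fin n) ℂ) :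
    ‖A.trace‖ ^ 2 / (A.rank : ℝ) ≤ ((Aᴴ * A).trace).re :=
  div_le_of_le_mul₀ (Nat.cast_nonneg _) A.re_trace_conjTranspose_mul_self_nonneg
    (A.norm_trace_sq_le_rank_mul_re_trace_conjTranspose_mul_self.trans_eq (mul_comm _ _))

theorem stmt_1 {n : ℕ} (A : Matrix (Fin n) (Fin n) ℂ) (hr : 1 ≤ A.rank) :
    ‖A.trace‖ ^ 2 / (A.rank : ℝ) ≤ ((Aᴴ * A).trace).re :=
  stmt_1_general A
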